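/- Let K be a compact subset of ℝⁿ and let f : K → ℝᵐ be continuous. For every ε > 0 there exists a radial neural network whose hidden layers all use the Step-ReLU activation, with N(f, K, ε) hidden layers whose widths are all equal to max(n, m) + 1 (input width n, output width m), whose feedforward function F : ℝⁿ → ℝᵐ satisfies |F(x) − f(x)| < ε for all x ∈ K. -/

import Mathlib

open scoped Classical
open Metric Set

noncomputable section

abbrev Euc (n : ℕ) := EuclideanSpace ℝ (Fin n)

def mulVecE {m n : ℕ} (W : Matrix (Fin m) (Fin n) ℝ) (v : Euc n) : Euc m :=
  WithLp.toLp 2 (fun j => ∑ k, W j k * v k)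

/-- Step-ReLU on ℝⁿ: the radial rescaling function sending v to v if ‖v‖ ≥ 1
and to 0 if ‖v‖ < 1. -/
def stepReLU {n : ℕ} (v : Euc n) : Euc n := if 1 ≤ ‖v‖ then v else 0

/-- N witnesses the covering property for f on K at scale ε: there are points
c₁, …, c_N ∈ K and radii r₁, …, r_N ∈ (0,1) such that the balls B_{rᵢ}(cᵢ)
cover K and f(B_{rᵢ}(cᵢ) ∩ K) ⊆ B_ε(f cᵢ) for all i. -/
def IsCoverSize {n m : ℕ} (f : Euc n → Euc m) (K : Set (Euc n)) (ε : ℝ) (N : ℕ) : Prop :=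
  ∃ (c : Fin N → Euc n) (r : Fin N → ℝ),
    (∀ i, c i ∈ K) ∧ (∀ i, r i ∈ Set.Ioo (0:ℝ) 1) ∧
    (K ⊆ ⋃ i, Metric.ball (c i) (r i)) ∧
    (∀ i, f '' (Metric.ball (c i) (r i) ∩ K) ⊆ Metric.ball (f (c i)) ε)

/-- N(f, K, ε): the minimal N as in IsCoverSize. -/
def coverNum {n m : ℕ} (f : Euc n → Euc m) (K : Set (Euc n)) (ε : ℝ) : ℕ :=
  sInf {N | IsCoverSize f K ε N}

/-- Iterating hidden layers of constant width k with Step-ReLU activations: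
hiddenStack k W b j maps the output of the first hidden layer through j further
hidden layers. -/
def hiddenStack (k : ℕ) (W : ℕ → Matrix (Fin k) (Fin k) ℝ) (b : ℕ → Euc k) :
    ℕ → Euc k → Euc k
  | 0 => fun v => v
  | (j+1) => fun v => stepReLU (mulVecE (W j) (hiddenStack k W b j v) + b j)

/-- The feedforward function of a radial neural network with input width n, exactly N
hidden layers all of width k with Step-ReLU activations, and a final affine layer into
ℝᵐ (with identity activation, a radial rescaling function).  For N = 0 the network is
the single affine layer x ↦ A₀ x + c₀; for N ≥ 1 it is
x ↦ A (ρ(W_{N-1} ⋯ ρ(W₀ x + b₀) ⋯ + b_{N-1})) + c. -/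
def constNet (n k m N : ℕ)
    (A₀ : Matrix (Fin m) (Fin n) ℝ) (c₀ : Euc m)
    (W₀ : Matrix (Fin k) (Fin n) ℝ) (b₀ : Euc k)
    (W : ℕ → Matrix (Fin k) (Fin k) ℝ) (b : ℕ → Euc k)
    (A : Matrix (Fin m) (Fin k) ℝ) (c : Euc m) : Euc n → Euc m :=
  match N with
  | 0 => fun x => mulVecE A₀ x + c₀
  | (N+1) => fun x =>
      mulVecE A (hiddenStack k W b N (stepReLU (mulVecE W₀ x + b₀))) + c

/-!
Cover `K` by `N` balls `B(cₗ, rₗ)` on which `f` varies by less than `ε`, and spend one hidden layer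
per ball. Embed `ℝⁿ` and `ℝᵐ` into `ℝ^(max n m + 1)` orthogonally to the last basis vector `e`; in
layer `ℓ` the state is `Tₗ z = (√3 / (2 rₗ)) (z - cₗ) + e / 2`, whose norm is `≥ 1` iff
`z ∉ B(cₗ, rₗ)`. As long as `x` has not met a ball the state is `Tₗ x`; Step-ReLU kills it in the
first ball `B(cⱼ, rⱼ)` containing `x`, and the next bias revives it as `Tⱼ₊₁ ζⱼ`, where `ζⱼ`
encodes `f(cⱼ)` and lies at distance `≥ 1` from every centre, so it survives all later layers.
The change of chart `Tₗ → Tₗ₊₁` is affine on the hyperplane `⟪e, ·⟫ = 1/2`, which misses `0`;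
hence it is realised by a linear map with any prescribed bias. A final affine layer decodes
`f(cⱼ)` from `T_N ζⱼ`.
-/

open scoped RealInnerProductSpace

section LevelSet

variable {𝕜 V W : Type*} [Field 𝕜] [AddCommGroup V] [Module 𝕜 V] [AddCommGroup W] [Module 𝕜 W]

theorem exists_linearMap_add_eq_on_level (φ : Module.Dual 𝕜 V) {t : 𝕜} (ht : t ≠ 0)
    (M : V →ₗ[𝕜] W) (δ b : W) : ∃ L : V →ₗ[𝕜] W, ∀ v, φ v = t → L v + b = M v + δ :=
  ⟨M + (t⁻¹ • φ).smulRight (δ - b), fun v hv => by simp [hv, ht, add_assoc]⟩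

end LevelSet

section BallChart

variable {V : Type*} [NormedAddCommGroup V] [InnerProductSpace ℝ V] {e : V}

/-- The factor `√3 / 2` makes `‖ballChart e r p z‖² = 3/4 (‖z - p‖ / r)² + 1/4` for a unit
`e ⊥ z - p`, which is `≥ 1` exactly when `‖z - p‖ ≥ r`. -/
def ballChart (e : V) (r : ℝ) (p z : V) : V := (√3 / (2 * r)) • (z - p) + (1 / 2 : ℝ) • e

theorem ballChart_add_right (r : ℝ) (p z z' : V) :
    ballChart e r p (z + z') = ballChart e r p z + (√3 / (2 * r)) • z' := by
  simp only [ballChart]; module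

theorem ballChart_eq_smul_add {r : ℝ} (hr : r ≠ 0) (r' : ℝ) (p p' z : V) :
    ballChart e r' p' z =
      (r / r') • ballChart e r p z + (ballChart e r' p' p - (r / (2 * r')) • e) := by
  have h₁ : r / r' * (√3 / (2 * r)) = √3 / (2 * r') := by field_simp
  have h₂ : r / r' * (1 / 2) = r / (2 * r') := by ring
  simp only [ballChart, smul_add, smul_smul, smul_sub, h₁, h₂]
  module

theorem inner_ballChart (he : ‖e‖ = 1) {p z : V} (hp : ⟪e, p⟫ = 0) (hz : ⟪e, z⟫ = 0) (r : ℝ) :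
    ⟪e, ballChart e r p z⟫ = 1 / 2 := by
  simp [ballChart, inner_add_right, inner_smul_right, inner_sub_right, hp, hz, he]

theorem one_le_norm_ballChart_iff (he : ‖e‖ = 1) {p z : V} (hp : ⟪e, p⟫ = 0) (hz : ⟪e, z⟫ = 0)
    {r : ℝ} (hr : 0 < r) : 1 ≤ ‖ballChart e r p z‖ ↔ r ≤ ‖z - p‖ := by
  have horth : ⟪(√3 / (2 * r)) • (z - p), (1 / 2 : ℝ) • e⟫ = 0 := by
    simp [inner_smul_left, inner_smul_right, inner_sub_left, real_inner_comm, hp, hz]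
  have hsq : ‖ballChart e r p z‖ ^ 2 = 3 / 4 * (‖z - p‖ ^ 2 / r ^ 2) + 1 / 4 := by
    rw [ballChart, norm_add_sq_real, horth, norm_smul, norm_smul, he,
      Real.norm_of_nonneg (by positivity), Real.norm_of_nonneg (by positivity)]
    field_simp
    rw [Real.sq_sqrt (by norm_num)]
    ring
  have hgap : 3 / 4 * (‖z - p‖ ^ 2 / r ^ 2) + 1 / 4 - 1 =
      3 / (4 * r ^ 2) * (‖z - p‖ ^ 2 - r ^ 2) := by
    field_simp
    ring
  rw [← sq_le_sq₀ zero_le_one (norm_nonneg _), ← sq_le_sq₀ hr.le (norm_nonneg _), hsq, one_pow,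
    ← sub_nonneg, hgap, mul_nonneg_iff_of_pos_left (by positivity), sub_nonneg]

end BallChart

section BallChartLayers

variable {V W : Type*} [NormedAddCommGroup V] [InnerProductSpace ℝ V]
  [AddCommGroup W] [Module ℝ W] {e : V}

theorem exists_linearMap_ballChart_transition (he : ‖e‖ = 1) {r : ℝ} (hr : r ≠ 0) (r' : ℝ)
    {p : V} (hp : ⟪e, p⟫ = 0) (p' b : V) :
    ∃ L : V →ₗ[ℝ] V, ∀ z, ⟪e, z⟫ = 0 → L (ballChart e r p z) + b = ballChart e r' p' z := by
  obtain ⟨L, hL⟩ := exists_linearMap_add_eq_on_level (innerₛₗ ℝ e) one_half_pos.ne'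
    ((r / r') • LinearMap.id) (ballChart e r' p' p - (r / (2 * r')) • e) b
  exact ⟨L, fun z hz => by
    rw [hL _ (inner_ballChart he hp hz r), ballChart_eq_smul_add hr r' p p' z]; rfl⟩

theorem exists_linearMap_ballChart_decode (he : ‖e‖ = 1) {r : ℝ} (hr : r ≠ 0)
    {p w : V} (hp : ⟪e, p⟫ = 0) (hw : ⟪e, w⟫ = 0)
    (J : W →ₗ[ℝ] V) (hJ : Function.Injective J) (hJe : ∀ y, ⟪e, J y⟫ = 0) (y₀ : W) :
    ∃ A : V →ₗ[ℝ] W, ∀ y, A (ballChart e r p (w + J y)) + y₀ = y := by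
  obtain ⟨π, hπ⟩ := J.exists_leftInverse_of_injective (LinearMap.ker_eq_bot.mpr hJ)
  have hs : √3 / (2 * r) ≠ 0 := by positivity
  obtain ⟨A, hA⟩ := exists_linearMap_add_eq_on_level (innerₛₗ ℝ e) one_half_pos.ne'
    ((√3 / (2 * r))⁻¹ • π) (-((√3 / (2 * r))⁻¹ • π (ballChart e r p w))) y₀
  refine ⟨A, fun y => ?_⟩
  have hy : π (J y) = y := LinearMap.congr_fun hπ y
  rw [hA _ (inner_ballChart he hp (by rw [inner_add_right, hw, hJe, add_zero]) r),
    ballChart_add_right]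
  simp only [LinearMap.smul_apply, map_add, map_smul, hy, smul_smul, mul_inv_cancel₀ hs,
    one_smul, add_neg_cancel_comm]

end BallChartLayers

theorem exists_linearIsometry_inner_single_last_eq_zero {n k : ℕ} (h : n ≤ k) :
    ∃ ι : Euc n →ₗᵢ[ℝ] Euc (k + 1), ∀ x, ⟪EuclideanSpace.single (Fin.last k) 1, ι x⟫ = 0 := by
  set g : Fin n → Fin (k + 1) := fun i => (Fin.castLE h i).castSucc
  set b := (EuclideanSpace.basisFun (Fin n) ℝ).toBasis
  set F := b.constr ℝ (EuclideanSpace.basisFun (Fin (k + 1)) ℝ ∘ g)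
  have hF : Orthonormal ℝ (F ∘ b) := by
    rw [show F ∘ b = _ from funext (b.constr_basis ℝ _)]
    exact (EuclideanSpace.basisFun _ ℝ).orthonormal.comp g
      ((Fin.castSucc_injective k).comp (Fin.castLE_injective h))
  have hFe : (innerₛₗ ℝ (EuclideanSpace.single (Fin.last k) (1 : ℝ))) ∘ₗ F = 0 :=
    b.ext fun i => by
      rw [LinearMap.comp_apply, b.constr_basis]
      simp [g, EuclideanSpace.inner_single_left, Fin.ext_iff]
      omega
  have hb : Orthonormal ℝ b := by
    rw [OrthonormalBasis.coe_toBasis]; exact (EuclideanSpace.basisFun _ ℝ).orthonormal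
  exact ⟨F.isometryOfOrthonormal hb hF, LinearMap.congr_fun hFe⟩

section BallChartIsometry

variable {V E F : Type*} [NormedAddCommGroup V] [InnerProductSpace ℝ V]
  [NormedAddCommGroup E] [NormedSpace ℝ E] [NormedAddCommGroup F] [NormedSpace ℝ F] {e : V}

theorem norm_ballChart_lt_one_iff (he : ‖e‖ = 1) (ι : E →ₗᵢ[ℝ] V) (hι : ∀ x, ⟪e, ι x⟫ = 0)
    {r : ℝ} (hr : 0 < r) {c x : E} : ‖ballChart e r (ι c) (ι x)‖ < 1 ↔ x ∈ ball c r := by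
  rw [← not_le, one_le_norm_ballChart_iff he (hι c) (hι x) hr, ← map_sub, ι.norm_map, mem_ball,
    dist_eq_norm, not_le]

theorem one_le_norm_ballChart_of_add_le (he : ‖e‖ = 1) (ι : E →ₗᵢ[ℝ] V) (ι' : F →ₗᵢ[ℝ] V)
    (hι : ∀ x, ⟪e, ι x⟫ = 0) (hι' : ∀ y, ⟪e, ι' y⟫ = 0) {r : ℝ} (hr : r ∈ Ioo (0 : ℝ) 1)
    {u : F} (hu : ‖u‖ = 1) {β : ℝ} {c : E} {y : F} (hβ : ‖y‖ + ‖c‖ + 1 ≤ β) :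
    1 ≤ ‖ballChart e r (ι c) (ι' (β • u + y))‖ := by
  rw [one_le_norm_ballChart_iff he (hι c) (hι' _) hr.1]
  have hβu : ‖β • u‖ = β := by
    rw [norm_smul, hu, mul_one, Real.norm_of_nonneg (by linarith [norm_nonneg y, norm_nonneg c])]
  calc r ≤ ‖β • u‖ - ‖y‖ - ‖c‖ := by linarith [hr.2]
    _ ≤ ‖β • u + y‖ - ‖c‖ := by linarith [norm_le_add_norm_add (β • u) y]
    _ = ‖ι' (β • u + y)‖ - ‖ι c‖ := by rw [ι.norm_map, ι'.norm_map]
    _ ≤ ‖ι' (β • u + y) - ι c‖ := norm_sub_norm_le _ _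

end BallChartIsometry

theorem mulVecE_toLpLin_symm {p q : ℕ} (L : Euc q →ₗ[ℝ] Euc p) (v : Euc q) :
    mulVecE ((Matrix.toLpLin 2 2).symm L) v = L v :=
  LinearMap.congr_fun ((Matrix.toLpLin 2 2).apply_symm_apply L) v

theorem mulVecE_zero {p q : ℕ} (W : Matrix (Fin p) (Fin q) ℝ) : mulVecE W 0 = 0 := by
  ext; simp [mulVecE]

theorem stepReLU_of_one_le {k : ℕ} {v : Euc k} (h : 1 ≤ ‖v‖) : stepReLU v = v := if_pos h

theorem stepReLU_of_lt {k : ℕ} {v : Euc k} (h : ‖v‖ < 1) : stepReLU v = 0 := if_neg h.not_ge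

section Capture

variable {V : Type*} [Norm V] (T : ℕ → V → V) (ζ : ℕ → V) (z₀ : V)

def capture : ℕ → V
  | 0 => z₀
  | ℓ + 1 => if 1 ≤ ‖T ℓ (capture ℓ)‖ then capture ℓ else ζ ℓ

theorem capture_mem {S : Set V} (hz₀ : z₀ ∈ S) (hζ : ∀ ℓ, ζ ℓ ∈ S) (ℓ : ℕ) :
    capture T ζ z₀ ℓ ∈ S := by
  induction ℓ with
  | zero => exact hz₀
  | succ ℓ ih => rw [capture]; split_ifs <;> simp [ih, hζ]

theorem capture_cases (hζ : ∀ ℓ j, 1 ≤ ‖T ℓ (ζ j)‖) (ℓ : ℕ) :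
    (capture T ζ z₀ ℓ = z₀ ∧ ∀ j < ℓ, 1 ≤ ‖T j z₀‖) ∨
      ∃ j < ℓ, ‖T j z₀‖ < 1 ∧ capture T ζ z₀ ℓ = ζ j := by
  induction ℓ with
  | zero => exact Or.inl ⟨rfl, by simp⟩
  | succ ℓ ih =>
    rw [capture]
    rcases ih with ⟨hz, hfar⟩ | ⟨j, hj, hnear, hz⟩
    · by_cases hℓ : 1 ≤ ‖T ℓ z₀‖
      · refine Or.inl ⟨by rw [hz, if_pos hℓ], fun j hj => ?_⟩
        rcases Nat.lt_succ_iff_lt_or_eq.mp hj with hj | rfl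
        exacts [hfar j hj, hℓ]
      · exact Or.inr ⟨ℓ, ℓ.lt_succ_self, not_le.mp hℓ, by rw [hz, if_neg hℓ]⟩
    · exact Or.inr ⟨j, hj.trans ℓ.lt_succ_self, hnear, by rw [hz, if_pos (hζ ℓ j)]⟩

end Capture

theorem hiddenStack_stepReLU_eq {k : ℕ} {W : ℕ → Matrix (Fin k) (Fin k) ℝ}
    {T : ℕ → Euc k → Euc k} {ζ : ℕ → Euc k} {S : Set (Euc k)} {z₀ : Euc k}
    (hlayer : ∀ ℓ, ∀ z ∈ S, mulVecE (W ℓ) (T ℓ z) + T (ℓ + 1) (ζ ℓ) = T (ℓ + 1) z)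
    (hz₀ : z₀ ∈ S) (hζ : ∀ ℓ, ζ ℓ ∈ S) (ℓ : ℕ) :
    hiddenStack k W (fun ℓ => T (ℓ + 1) (ζ ℓ)) ℓ (stepReLU (T 0 z₀)) =
      stepReLU (T ℓ (capture T ζ z₀ ℓ)) := by
  induction ℓ with
  | zero => rfl
  | succ ℓ ih =>
    dsimp only [hiddenStack]
    rw [ih, capture]
    by_cases h : 1 ≤ ‖T ℓ (capture T ζ z₀ ℓ)‖
    · rw [stepReLU_of_one_le h, if_pos h, hlayer ℓ _ (capture_mem T ζ z₀ hz₀ hζ ℓ)]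
    · rw [stepReLU_of_lt (not_le.mp h), if_neg h, mulVecE_zero, zero_add]

theorem exists_mulVecE_hiddenStack_add_eq {k m N : ℕ} {W : ℕ → Matrix (Fin k) (Fin k) ℝ}
    {T : ℕ → Euc k → Euc k} {ζ : ℕ → Euc k} {S : Set (Euc k)} {z₀ : Euc k}
    {A : Matrix (Fin m) (Fin k) ℝ} {y : ℕ → Euc m}
    (hlayer : ∀ ℓ, ∀ z ∈ S, mulVecE (W ℓ) (T ℓ z) + T (ℓ + 1) (ζ ℓ) = T (ℓ + 1) z)
    (hz₀ : z₀ ∈ S) (hζS : ∀ ℓ, ζ ℓ ∈ S) (hfar : ∀ ℓ j, 1 ≤ ‖T ℓ (ζ j)‖)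
    (hA : ∀ j, mulVecE A (T N (ζ j)) + y N = y j) {i : ℕ} (hi : i ≤ N) (hnear : ‖T i z₀‖ < 1) :
    ∃ j ≤ N, ‖T j z₀‖ < 1 ∧
      mulVecE A (hiddenStack k W (fun ℓ => T (ℓ + 1) (ζ ℓ)) N (stepReLU (T 0 z₀))) + y N = y j := by
  rw [hiddenStack_stepReLU_eq hlayer hz₀ hζS]
  by_cases hN : 1 ≤ ‖T N (capture T ζ z₀ N)‖
  · rw [stepReLU_of_one_le hN]
    rcases capture_cases T ζ z₀ hfar (N + 1) with ⟨-, hout⟩ | ⟨j, hj, hj_near, hz⟩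
    · exact absurd (hout i (Nat.lt_succ_of_le hi)) (not_le.mpr hnear)
    · rw [capture, if_pos hN] at hz
      exact ⟨j, Nat.lt_succ_iff.mp hj, hj_near, by rw [hz, hA]⟩
  · rw [stepReLU_of_lt (not_le.mp hN), mulVecE_zero, zero_add]
    rcases capture_cases T ζ z₀ hfar N with ⟨hz, -⟩ | ⟨j, -, -, hz⟩
    · exact ⟨N, le_rfl, by rwa [hz, not_le] at hN, rfl⟩
    · exact absurd (hfar N j) (hz ▸ hN)

theorem constNet_succ {n k m N : ℕ} (A₀ : Matrix (Fin m) (Fin n) ℝ) (c₀ : Euc m)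
    (W₀ : Matrix (Fin k) (Fin n) ℝ) (b₀ : Euc k) (W : ℕ → Matrix (Fin k) (Fin k) ℝ)
    (b : ℕ → Euc k) (A : Matrix (Fin m) (Fin k) ℝ) (c : Euc m) (x : Euc n) :
    constNet n k m (N + 1) A₀ c₀ W₀ b₀ W b A c x =
      mulVecE A (hiddenStack k W b N (stepReLU (mulVecE W₀ x + b₀))) + c :=
  rfl

theorem exists_constNet_eq_on_balls {n m k : ℕ} (hnk : n ≤ k) (hm : 0 < m) (hmk : m ≤ k)
    (N : ℕ) (c : ℕ → Euc n) (r : ℕ → ℝ) (y : ℕ → Euc m) (hr : ∀ ℓ, r ℓ ∈ Ioo (0 : ℝ) 1)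
    {R Y : ℝ} (hc : ∀ ℓ, ‖c ℓ‖ ≤ R) (hy : ∀ ℓ, ‖y ℓ‖ ≤ Y) :
    ∃ (W₀ : Matrix (Fin (k + 1)) (Fin n) ℝ) (b₀ : Euc (k + 1))
      (W : ℕ → Matrix (Fin (k + 1)) (Fin (k + 1)) ℝ) (b : ℕ → Euc (k + 1))
      (A : Matrix (Fin m) (Fin (k + 1)) ℝ) (c' : Euc m),
      ∀ x, ∀ i ≤ N, x ∈ ball (c i) (r i) →
        ∃ j ≤ N, x ∈ ball (c j) (r j) ∧
          constNet n (k + 1) m (N + 1) 0 0 W₀ b₀ W b A c' x = y j := by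
  obtain ⟨ιn, hιn⟩ := exists_linearIsometry_inner_single_last_eq_zero hnk
  obtain ⟨ιm, hιm⟩ := exists_linearIsometry_inner_single_last_eq_zero hmk
  set e : Euc (k + 1) := EuclideanSpace.single (Fin.last k) 1
  have he : ‖e‖ = 1 := by simp [e]
  set u : Euc m := EuclideanSpace.single ⟨0, hm⟩ 1
  obtain ⟨ζ, hζ⟩ : ∃ ζ : ℕ → Euc (k + 1), ∀ j, ζ j = ιm ((Y + R + 1) • u + y j) :=
    ⟨_, fun _ => rfl⟩
  obtain ⟨T, hT⟩ : ∃ T : ℕ → Euc (k + 1) → Euc (k + 1), ∀ ℓ, T ℓ = ballChart e (r ℓ) (ιn (c ℓ)) :=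
    ⟨_, fun _ => rfl⟩
  have hfar : ∀ ℓ j, 1 ≤ ‖T ℓ (ζ j)‖ := fun ℓ j => by
    rw [hT, hζ]
    exact one_le_norm_ballChart_of_add_le he ιn ιm hιn hιm (hr ℓ) (by simp [u])
      (by linarith [hy j, hc ℓ])
  choose L hL using fun ℓ => exists_linearMap_ballChart_transition he (hr ℓ).1.ne' (r (ℓ + 1))
    (hιn (c ℓ)) (ιn (c (ℓ + 1))) (T (ℓ + 1) (ζ ℓ))
  obtain ⟨D, hD⟩ := exists_linearMap_ballChart_decode he (hr N).1.ne' (hιn (c N))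
    (hιm ((Y + R + 1) • u)) ιm.toLinearMap ιm.injective hιm (y N)
  set W₀ := (Matrix.toLpLin 2 2).symm ((√3 / (2 * r 0)) • ιn.toLinearMap)
  set W := fun ℓ => (Matrix.toLpLin 2 2).symm (L ℓ)
  set A := (Matrix.toLpLin 2 2).symm D
  have hlayer : ∀ ℓ, ∀ z ∈ {z | ⟪e, z⟫ = 0},
      mulVecE (W ℓ) (T ℓ z) + T (ℓ + 1) (ζ ℓ) = T (ℓ + 1) z := fun ℓ z hz => by
    simpa only [W, mulVecE_toLpLin_symm, hT] using hL ℓ z hz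
  have hdecode : ∀ j, mulVecE A (T N (ζ j)) + y N = y j := fun j => by
    simpa only [A, mulVecE_toLpLin_symm, hT, hζ, map_add, LinearIsometry.coe_toLinearMap]
      using hD (y j)
  refine ⟨W₀, T 0 0, W, fun ℓ => T (ℓ + 1) (ζ ℓ), A, y N, fun x i hi hx => ?_⟩
  have hball : ∀ ℓ, ‖T ℓ (ιn x)‖ < 1 ↔ x ∈ ball (c ℓ) (r ℓ) := fun ℓ => by
    rw [hT, norm_ballChart_lt_one_iff he ιn hιn (hr ℓ).1]
  obtain ⟨j, hj, hnear, hout⟩ := exists_mulVecE_hiddenStack_add_eq hlayer (hιn x)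
    (fun j => by rw [hζ]; exact hιm _) hfar hdecode hi ((hball i).mpr hx)
  have hfirst : mulVecE W₀ x + T 0 0 = T 0 (ιn x) := by
    rw [mulVecE_toLpLin_symm, hT, ← zero_add (ιn x), ballChart_add_right]
    exact add_comm _ _
  exact ⟨j, hj, (hball j).mp hnear, by rwa [constNet_succ, hfirst]⟩

theorem exists_isCoverSize {n m : ℕ} {K : Set (Euc n)} (hK : IsCompact K) {f : Euc n → Euc m}
    (hf : ContinuousOn f K) {ε : ℝ} (hε : 0 < ε) : ∃ N, IsCoverSize f K ε N := by
  have hloc : ∀ x ∈ K, ∃ δ ∈ Ioo (0 : ℝ) 1, f '' (ball x δ ∩ K) ⊆ ball (f x) ε := fun x hx => by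
    obtain ⟨δ, hδ, hfδ⟩ := Metric.continuousOn_iff.mp hf x hx ε hε
    refine ⟨min δ (1 / 2), ⟨by positivity, by linarith [min_le_right δ (1 / 2)]⟩, ?_⟩
    rintro _ ⟨z, ⟨hzx, hzK⟩, rfl⟩
    exact hfδ z hzK (lt_of_lt_of_le hzx (min_le_left _ _))
  choose! δ hδ himg using hloc
  obtain ⟨t, htK, hcov⟩ := hK.elim_nhds_subcover (fun x => ball x (δ x))
    fun x hx => ball_mem_nhds x (hδ x hx).1
  set c : Fin t.card → Euc n := fun i => t.equivFin.symm i
  refine ⟨t.card, c, δ ∘ c, fun i => htK _ (t.equivFin.symm i).2,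
    fun i => hδ _ (htK _ (t.equivFin.symm i).2), fun x hx => ?_,
    fun i => himg _ (htK _ (t.equivFin.symm i).2)⟩
  obtain ⟨z, hzt, hxz⟩ := mem_iUnion₂.mp (hcov hx)
  exact mem_iUnion.mpr ⟨t.equivFin ⟨z, hzt⟩, by simpa [c] using hxz⟩

/-- Let K ⊆ ℝⁿ be compact and f : K → ℝᵐ continuous.  For every
ε > 0 there is a radial neural network with N(f, K, ε) hidden layers all of width
max(n, m) + 1, Step-ReLU activations at all hidden layers, and a final affine layer into
ℝᵐ, whose feedforward function F satisfies ‖F x − f x‖ < ε for all x ∈ K. -/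
theorem universal_approximation_max_plus_one {n m : ℕ}
    (K : Set (Euc n)) (hK : IsCompact K)
    (f : Euc n → Euc m) (hf : ContinuousOn f K) (ε : ℝ) (hε : 0 < ε) :
    ∃ (A₀ : Matrix (Fin m) (Fin n) ℝ) (c₀ : Euc m)
      (W₀ : Matrix (Fin (max n m + 1)) (Fin n) ℝ) (b₀ : Euc (max n m + 1))
      (W : ℕ → Matrix (Fin (max n m + 1)) (Fin (max n m + 1)) ℝ) (b : ℕ → Euc (max n m + 1))
      (A : Matrix (Fin m) (Fin (max n m + 1)) ℝ) (c : Euc m),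
      ∀ x ∈ K,
        ‖constNet n (max n m + 1) m (coverNum f K ε) A₀ c₀ W₀ b₀ W b A c x - f x‖ < ε := by
  rcases Nat.eq_zero_or_pos m with rfl | hm
  · exact ⟨0, 0, 0, 0, 0, 0, 0, 0, fun x _ => by simpa [Subsingleton.elim _ (0 : Euc 0)] using hε⟩
  have hcover : IsCoverSize f K ε (coverNum f K ε) := Nat.sInf_mem (exists_isCoverSize hK hf hε)
  cases hN : coverNum f K ε with
  | zero =>
    obtain ⟨c, r, -, -, hcov, -⟩ := hN ▸ hcover
    exact ⟨0, 0, 0, 0, 0, 0, 0, 0, fun x hx => (mem_iUnion.mp (hcov hx)).choose.elim0⟩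
  | succ N =>
    obtain ⟨c, r, -, hr, hcov, himg⟩ := hN ▸ hcover
    obtain ⟨R, hR⟩ := (Set.finite_range fun i => ‖c i‖).bddAbove
    obtain ⟨Y, hY⟩ := (Set.finite_range fun i => ‖f (c i)‖).bddAbove
    obtain ⟨W₀, b₀, W, b, A, c', hnet⟩ := exists_constNet_eq_on_balls (le_max_left n m) hm
      (le_max_right n m) N (c ∘ Fin.ofNat _) (r ∘ Fin.ofNat _) (f ∘ c ∘ Fin.ofNat _)
      (fun _ => hr _) (fun _ => hR ⟨_, rfl⟩) (fun _ => hY ⟨_, rfl⟩)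
    refine ⟨0, 0, W₀, b₀, W, b, A, c', fun x hx => ?_⟩
    obtain ⟨i, hi⟩ := mem_iUnion.mp (hcov hx)
    obtain ⟨j, -, hj, hFx⟩ := hnet x i (Nat.lt_succ_iff.mp i.2) (by simpa using hi)
    rw [hFx, ← dist_eq_norm, dist_comm]
    exact himg _ ⟨x, ⟨hj, hx⟩, rfl⟩

end
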